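/- Let X = (X_n)_{n∈ℤ} be a discrete white noise. Then the probability ℙ(∃ α ≥ 0, sup_{n∈ℤ} |X_n|/(1+|n|)^α < ∞) is either 0 or 1, and it equals 1 if and only if there exists α > 0 such that Σ_{n≥0} ℙ(|X_0| ≥ n^α) < ∞. -/

import Mathlib

/-! If `∑ ℙ(|X₀| ≥ n^α) < ∞`, the first Borel–Cantelli lemma over `ℤ` shows that almost surely
`|Xₙ| < |n|^α` for all but finitely many `n`, so `X` is tempered. If the series diverges for every
`α > 0`, independence and the second Borel–Cantelli lemma give, for each `k`, `|Xₙ| ≥ n^(k+1)`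
infinitely often almost surely; a tempered sequence is eventually below `n^(k+1)` for some `k`. -/

open MeasureTheory ProbabilityTheory Filter
open scoped ENNReal

/-- Membership `u ∈ 𝒮'(ℤ)`. -/
def IsTempered (u : ℤ → ℝ) : Prop :=
  ∃ α : ℝ, 0 ≤ α ∧ ∃ C : ℝ, ∀ n : ℤ, |u n| ≤ C * (1 + |(n : ℝ)|) ^ α

section Tempered

variable {u : ℤ → ℝ}

lemma isTempered_of_eventually_abs_le {α : ℝ} (hα : 0 ≤ α)
    (h : ∀ᶠ n in cofinite, |u n| ≤ (n.natAbs : ℝ) ^ α) : IsTempered u := by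
  have hpos (n : ℤ) : 0 < (1 + |(n : ℝ)|) ^ α := by positivity
  have hO : u =O[cofinite] fun n : ℤ => (1 + |(n : ℝ)|) ^ α := by
    refine Asymptotics.IsBigO.of_bound 1 (h.mono fun n hn => ?_)
    rw [Real.norm_eq_abs, Real.norm_of_nonneg (hpos n).le, one_mul]
    refine hn.trans (Real.rpow_le_rpow (by positivity) ?_ hα)
    rw [Nat.cast_natAbs, Int.cast_abs]
    linarith
  obtain ⟨C, hC⟩ := (Asymptotics.isBigO_cofinite_iff fun n hn => ((hpos n).ne' hn).elim).1 hO
  exact ⟨α, hα, C, fun n => by simpa [Real.norm_of_nonneg (hpos n).le] using hC n⟩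

lemma IsTempered.exists_nat_eventually_abs_lt (hu : IsTempered u) :
    ∃ k : ℕ, ∀ᶠ n : ℕ in atTop, |u n| < (n : ℝ) ^ ((k : ℝ) + 1) := by
  obtain ⟨α, hα, C, hC⟩ := hu
  have hC₀ : 0 ≤ C := by simpa using (abs_nonneg _).trans (hC 0)
  refine ⟨⌈α⌉₊, (eventually_gt_atTop ⌈C * 2 ^ α⌉₊).mono fun n hn => ?_⟩
  have hn₁ : (1 : ℝ) ≤ n := by exact_mod_cast (Nat.zero_lt_of_lt hn)
  have hCn : C * 2 ^ α < n := (Nat.le_ceil _).trans_lt (by exact_mod_cast hn)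
  calc |u n| ≤ C * (1 + |((n : ℤ) : ℝ)|) ^ α := hC n
    _ ≤ C * (2 * n) ^ α := by
        gcongr
        push_cast
        rw [abs_of_nonneg (by positivity)]
        linarith
    _ = C * 2 ^ α * (n : ℝ) ^ α := by rw [Real.mul_rpow (by norm_num) (by positivity), mul_assoc]
    _ < n * (n : ℝ) ^ α := by gcongr
    _ = (n : ℝ) ^ (α + 1) := by rw [Real.rpow_add_one (by positivity), mul_comm]
    _ ≤ (n : ℝ) ^ ((⌈α⌉₊ : ℝ) + 1) := by
        gcongr
        exact Nat.le_ceil α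

end Tempered

lemma ENNReal.tsum_comp_natAbs_ne_top {g : ℕ → ℝ≥0∞} (hg : ∑' n, g n ≠ ∞) :
    ∑' n : ℤ, g n.natAbs ≠ ∞ := by
  have h := tsum_nat_add_neg (f := fun n : ℤ => g n.natAbs) ENNReal.summable
  simp only [Int.natAbs_natCast, Int.natAbs_neg, ENNReal.tsum_add] at h
  refine ne_top_of_le_ne_top (ENNReal.add_ne_top.2 ⟨hg, hg⟩) ?_
  rw [h]
  exact le_self_add

lemma ProbabilityTheory.iIndepFun.iIndepSet_preimage {Ω ι β : Type*} [MeasurableSpace Ω]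
    {μ : Measure Ω} [MeasurableSpace β] {f : ι → Ω → β} (hf : ∀ i, Measurable (f i))
    (h : iIndepFun f μ) {A : ι → Set β} (hA : ∀ i, MeasurableSet (A i)) :
    iIndepSet (fun i => f i ⁻¹' A i) μ := by
  rw [iIndepSet_iff_meas_biInter fun i => hf i (hA i)]
  exact fun S => h.measure_inter_preimage_eq_mul S fun i _ => hA i

lemma ProbabilityTheory.IdentDistrib.measure_le_abs_eq {α β : Type*} [MeasurableSpace α]
    [MeasurableSpace β] {μ : Measure α} {ν : Measure β} {f : α → ℝ} {g : β → ℝ}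
    (h : IdentDistrib f g μ ν) (c : ℝ) : μ {x | c ≤ |f x|} = ν {x | c ≤ |g x|} :=
  h.measure_mem_eq (measurableSet_le measurable_const measurable_abs)

lemma ProbabilityTheory.iIndepSet.ae_frequently_mem {Ω : Type*} [MeasurableSpace Ω]
    {μ : Measure Ω} {s : ℕ → Set Ω} (hsm : ∀ n, MeasurableSet (s n)) (hs : iIndepSet s μ)
    (hsum : ∑' n, μ (s n) = ∞) : ∀ᵐ ω ∂μ, ∃ᶠ n in atTop, ω ∈ s n := by
  have := hs.isProbabilityMeasure
  have hlimsup := (mem_ae_iff_prob_eq_one (MeasurableSet.measurableSet_limsup hsm)).2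
    (measure_limsup_eq_one hsm hs hsum)
  filter_upwards [hlimsup] with ω hω using mem_limsup_iff_frequently_mem.1 hω

section WhiteNoise

variable {Ω : Type*} [MeasurableSpace Ω] {P : Measure Ω} {X : ℤ → Ω → ℝ}

lemma ae_isTempered_of_tsum_ne_top (hident : ∀ n, IdentDistrib (X n) (X 0) P P) {α : ℝ}
    (hα : 0 ≤ α) (hsum : ∑' n : ℕ, P {ω | (n : ℝ) ^ α ≤ |X 0 ω|} ≠ ∞) :
    ∀ᵐ ω ∂P, IsTempered fun n => X n ω := by
  have hsumℤ : ∑' n : ℤ, P {ω | (n.natAbs : ℝ) ^ α ≤ |X n ω|} ≠ ∞ := by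
    simpa only [fun n => (hident n).measure_le_abs_eq] using
      ENNReal.tsum_comp_natAbs_ne_top hsum
  filter_upwards [ae_finite_setOfPred_mem hsumℤ] with ω hω
  refine isTempered_of_eventually_abs_le hα (eventually_cofinite.2 (hω.subset fun n hn => ?_))
  exact (not_le.1 hn).le

lemma ae_not_isTempered_of_tsum_eq_top (hmeas : ∀ n, Measurable (X n)) (hindep : iIndepFun X P)
    (hident : ∀ n, IdentDistrib (X n) (X 0) P P)
    (hdiv : ∀ α : ℝ, 0 < α → ∑' n : ℕ, P {ω | (n : ℝ) ^ α ≤ |X 0 ω|} = ∞) :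
    ∀ᵐ ω ∂P, ¬IsTempered fun n => X n ω := by
  have hfreq (k : ℕ) : ∀ᵐ ω ∂P, ∃ᶠ n : ℕ in atTop, (n : ℝ) ^ ((k : ℝ) + 1) ≤ |X n ω| := by
    have hs (n : ℕ) : MeasurableSet {x : ℝ | (n : ℝ) ^ ((k : ℝ) + 1) ≤ |x|} :=
      measurableSet_le measurable_const measurable_abs
    refine iIndepSet.ae_frequently_mem (fun n => hmeas n (hs n))
      ((hindep.precomp Nat.cast_injective).iIndepSet_preimage (fun n : ℕ => hmeas n) hs) ?_
    exact (tsum_congr fun n : ℕ => (hident n).measure_le_abs_eq _).trans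
      (hdiv ((k : ℝ) + 1) (by positivity))
  filter_upwards [ae_all_iff.2 hfreq] with ω hω hT
  obtain ⟨k, hk⟩ := hT.exists_nat_eventually_abs_lt
  obtain ⟨n, hle, hlt⟩ := ((hω k).and_eventually hk).exists
  exact hle.not_gt hlt

end WhiteNoise

/-- For a discrete white noise `X`, the probability that `X` is tempered
(i.e. `∃ α ≥ 0, sup_n |X_n|/(1+|n|)^α < ∞`) is `0` or `1`, and it equals `1` iff there
exists `α > 0` with `Σ_{n ≥ 0} ℙ(|X_0| ≥ n^α) < ∞`. -/
theorem zero_one_law_tempered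
    {Ω : Type*} [MeasurableSpace Ω] (P : Measure Ω) [IsProbabilityMeasure P]
    (X : ℤ → Ω → ℝ) (hmeas : ∀ n, Measurable (X n))
    (hindep : iIndepFun X P)
    (hident : ∀ n : ℤ, IdentDistrib (X n) (X 0) P P) :
    (P {ω | ∃ α : ℝ, 0 ≤ α ∧ ∃ C : ℝ, ∀ n : ℤ, |X n ω| ≤ C * (1 + |(n : ℝ)|) ^ α} = 0 ∨
     P {ω | ∃ α : ℝ, 0 ≤ α ∧ ∃ C : ℝ, ∀ n : ℤ, |X n ω| ≤ C * (1 + |(n : ℝ)|) ^ α} = 1) ∧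
    (P {ω | ∃ α : ℝ, 0 ≤ α ∧ ∃ C : ℝ, ∀ n : ℤ, |X n ω| ≤ C * (1 + |(n : ℝ)|) ^ α} = 1 ↔
      ∃ α : ℝ, 0 < α ∧ (∑' n : ℕ, P {ω | (n : ℝ) ^ α ≤ |X 0 ω|}) < ⊤) := by
  change (P {ω | IsTempered fun n => X n ω} = 0 ∨ P {ω | IsTempered fun n => X n ω} = 1) ∧
    (P {ω | IsTempered fun n => X n ω} = 1 ↔ _)
  by_cases hconv : ∃ α : ℝ, 0 < α ∧ (∑' n : ℕ, P {ω | (n : ℝ) ^ α ≤ |X 0 ω|}) < ⊤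
  · obtain ⟨α, hα, hsum⟩ := hconv
    have hT : P {ω | IsTempered fun n => X n ω} = 1 := by
      rw [measure_congr (ae_eq_univ.2 (ae_isTempered_of_tsum_ne_top hident hα.le hsum.ne)),
        measure_univ]
    exact ⟨Or.inr hT, iff_of_true hT ⟨α, hα, hsum⟩⟩
  · have hdiv (α : ℝ) (hα : 0 < α) : ∑' n : ℕ, P {ω | (n : ℝ) ^ α ≤ |X 0 ω|} = ∞ :=
      not_lt_top_iff.1 fun hsum => hconv ⟨α, hα, hsum⟩
    have hT : P {ω | IsTempered fun n => X n ω} = 0 :=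
      measure_eq_zero_iff_ae_notMem.2 (ae_not_isTempered_of_tsum_eq_top hmeas hindep hident hdiv)
    exact ⟨Or.inl hT, iff_of_false (by simp [hT]) hconv⟩
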